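/- arXiv:1505.04083 — 3 statements merged into one kernel-verified Lean document; each statement's English description precedes it below -/
import Mathlib

section
/- For every nonnegative function f on ℝⁿ and t > 0, the Hessian of log(Q_t f) satisfies ∇²log(Q_t f) ≥ -(1/(2t))·id pointwise (wherever Q_t f > 0). -/
open MeasureTheory

noncomputable def stdGaussian (n : ℕ) : Measure (EuclideanSpace ℝ (Fin n)) :=
  volume.withDensity
    (fun x => ENNReal.ofReal ((2 * Real.pi) ^ (-(n : ℝ) / 2) * Real.exp (-‖x‖ ^ 2 / 2)))

noncomputable def OU (n : ℕ) (t : ℝ) (f : EuclideanSpace ℝ (Fin n) → ℝ)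
    (x : EuclideanSpace ℝ (Fin n)) : ℝ :=
  ∫ y, f (Real.exp (-t) • x + Real.sqrt (1 - Real.exp (-2 * t)) • y) ∂(stdGaussian n)

/-!
With `ρ = e^{-t}` and `σ = √(1 - e^{-2t})`, `Q_t f (x) = G((ρ/σ) x)` where
`G(x) = ∫ φ(y) h(y + x) dy`, `φ` is the Gaussian density and `h z = f(σ z)`. For `x = a x₁ + b x₂`
with `v = x₂ - x₁`, completing the square gives
`φ(y) = e^{ab‖v‖²/2} φ(y + b v)^a φ(y - a v)^b`, and `y ↦ φ(y + b v) h(y + x)`,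
`y ↦ φ(y - a v) h(y + x)` are translates of the integrands of `G(x₁)`, `G(x₂)`. Hölder's inequality
then gives `G(x) ≤ e^{ab‖v‖²/2} G(x₁)^a G(x₂)^b`, i.e. `log Q_t f` is strongly convex with modulus
`-(ρ/σ)² = -1/(e^{2t} - 1) ≥ -1/(2t)`.
-/

open scoped ENNReal

section

open Real

theorem strongConvexOn_log_of_le_exp_mul_rpow {E : Type*} [NormedAddCommGroup E]
    [NormedSpace ℝ E] {s : Set E} (hs : Convex ℝ s) {F : E → ℝ} (hF : ∀ x ∈ s, 0 < F x)
    {m : ℝ} (h : ∀ x ∈ s, ∀ y ∈ s, ∀ a b : ℝ, 0 ≤ a → 0 ≤ b → a + b = 1 →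
      F (a • x + b • y) ≤ exp (-(a * b * (m / 2 * ‖x - y‖ ^ 2))) * F x ^ a * F y ^ b) :
    StrongConvexOn s m (fun x => log (F x)) := by
  refine ⟨hs, fun x hx y hy a b ha hb hab => ?_⟩
  have hFx := hF x hx
  have hFy := hF y hy
  calc log (F (a • x + b • y))
      ≤ log (exp (-(a * b * (m / 2 * ‖x - y‖ ^ 2))) * F x ^ a * F y ^ b) :=
        log_le_log (hF _ (hs hx hy ha hb hab)) (h x hx y hy a b ha hb hab)
    _ = a • log (F x) + b • log (F y) - a * b * (m / 2 * ‖x - y‖ ^ 2) := by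
        rw [log_mul (by positivity) (by positivity), log_mul (by positivity) (by positivity),
          log_exp, log_rpow hFx, log_rpow hFy, smul_eq_mul, smul_eq_mul]
        ring

theorem inv_exp_sub_one_le_inv {s : ℝ} (hs : 0 < s) : (exp s - 1)⁻¹ ≤ s⁻¹ :=
  inv_anti₀ hs (by linarith [add_one_le_exp s])

section InnerProductSpace

variable {E : Type*} [NormedAddCommGroup E] [InnerProductSpace ℝ E]

theorem norm_smul_add_smul_sq {a b : ℝ} (hab : a + b = 1) (p q : E) :
    ‖a • p + b • q‖ ^ 2 = a * ‖p‖ ^ 2 + b * ‖q‖ ^ 2 - a * b * ‖p - q‖ ^ 2 := by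
  obtain rfl : b = 1 - a := by linarith
  rw [norm_add_sq_real, norm_sub_sq_real, real_inner_smul_left, real_inner_smul_right,
    norm_smul, norm_smul, mul_pow, mul_pow, Real.norm_eq_abs, Real.norm_eq_abs, sq_abs, sq_abs]
  ring

theorem exp_neg_norm_sq_div_two_eq {a b : ℝ} (hab : a + b = 1) (y v : E) :
    exp (-‖y‖ ^ 2 / 2) = exp (a * b * ‖v‖ ^ 2 / 2) * exp (-‖y + b • v‖ ^ 2 / 2) ^ a *
      exp (-‖y - a • v‖ ^ 2 / 2) ^ b := by
  have hsum : a • (y + b • v) + b • (y - a • v) = (a + b) • y := by module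
  have hdiff : (y + b • v) - (y - a • v) = (a + b) • v := by module
  have hsq := norm_smul_add_smul_sq hab (y + b • v) (y - a • v)
  rw [hsum, hdiff, hab, one_smul, one_smul] at hsq
  rw [← exp_mul, ← exp_mul, ← exp_add, ← exp_add]
  congr 1
  linear_combination (-1 / 2 : ℝ) * hsq

theorem ofReal_mul_exp_neg_norm_sq_div_two_eq {c : ℝ} (hc : 0 ≤ c) {a b : ℝ} (ha : 0 ≤ a)
    (hb : 0 ≤ b) (hab : a + b = 1) (y v : E) :
    ENNReal.ofReal (c * exp (-‖y‖ ^ 2 / 2)) = ENNReal.ofReal (exp (a * b * ‖v‖ ^ 2 / 2)) *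
      ENNReal.ofReal (c * exp (-‖y + b • v‖ ^ 2 / 2)) ^ a *
      ENNReal.ofReal (c * exp (-‖y - a • v‖ ^ 2 / 2)) ^ b := by
  have hc' : c = c ^ a * c ^ b := by
    rw [← rpow_add_of_nonneg hc ha hb, hab, rpow_one]
  rw [ENNReal.ofReal_rpow_of_nonneg (by positivity) ha,
    ENNReal.ofReal_rpow_of_nonneg (by positivity) hb, ← ENNReal.ofReal_mul (by positivity),
    ← ENNReal.ofReal_mul (by positivity), mul_rpow hc (by positivity),
    mul_rpow hc (by positivity), exp_neg_norm_sq_div_two_eq hab y v]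
  nth_rewrite 1 [hc']
  ring_nf

noncomputable def gaussianConv [MeasurableSpace E] (μ : Measure E) (c : ℝ) (h : E → ℝ≥0∞)
    (x : E) : ℝ≥0∞ :=
  ∫⁻ y, ENNReal.ofReal (c * exp (-‖y‖ ^ 2 / 2)) * h (y + x) ∂μ

variable [MeasurableSpace E] [BorelSpace E]

theorem gaussianConv_smul_add_smul_le (μ : Measure E) [μ.IsAddRightInvariant] {c : ℝ}
    (hc : 0 ≤ c) {h : E → ℝ≥0∞} (hh : AEMeasurable h μ) {a b : ℝ} (ha : 0 ≤ a) (hb : 0 ≤ b)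
    (hab : a + b = 1) (x₁ x₂ : E) :
    gaussianConv μ c h (a • x₁ + b • x₂) ≤ ENNReal.ofReal (exp (a * b * ‖x₁ - x₂‖ ^ 2 / 2)) *
      gaussianConv μ c h x₁ ^ a * gaussianConv μ c h x₂ ^ b := by
  set x := a • x₁ + b • x₂
  set v := x₂ - x₁
  set φ : E → ℝ≥0∞ := fun y => ENNReal.ofReal (c * exp (-‖y‖ ^ 2 / 2))
  set K := ENNReal.ofReal (exp (a * b * ‖x₁ - x₂‖ ^ 2 / 2))
  set u : E → ℝ≥0∞ := fun y => φ (y + b • v) * h (y + x)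
  set w : E → ℝ≥0∞ := fun y => φ (y - a • v) * h (y + x)
  have hφ : Measurable φ := by fun_prop
  have hhx : AEMeasurable (fun y => h (y + x)) μ :=
    hh.comp_quasiMeasurePreserving (measurePreserving_add_right μ x).quasiMeasurePreserving
  have hu : AEMeasurable u μ := ((hφ.comp (measurable_add_const _)).aemeasurable).mul hhx
  have hw : AEMeasurable w μ := ((hφ.comp (measurable_sub_const _)).aemeasurable).mul hhx
  have hpt : ∀ y, φ y * h (y + x) = K * (u y ^ a * w y ^ b) := by
    intro y
    have hH : h (y + x) = h (y + x) ^ a * h (y + x) ^ b := by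
      rw [← ENNReal.rpow_add_of_nonneg _ _ ha hb, hab, ENNReal.rpow_one]
    simp only [u, w, φ, K, ENNReal.mul_rpow_of_nonneg _ _ ha, ENNReal.mul_rpow_of_nonneg _ _ hb]
    conv_lhs => rw [ofReal_mul_exp_neg_norm_sq_div_two_eq hc ha hb hab y v, norm_sub_rev x₂ x₁, hH]
    ring
  have hx₁ : ∫⁻ y, u y ∂μ = gaussianConv μ c h x₁ := by
    have hshift : ∀ y, y + x = (y + b • v) + x₁ := fun y => by
      obtain rfl : a = 1 - b := by linarith
      simp only [x, v]; module
    simp_rw [u, hshift]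
    exact lintegral_add_right_eq_self (fun z => φ z * h (z + x₁)) (b • v)
  have hx₂ : ∫⁻ y, w y ∂μ = gaussianConv μ c h x₂ := by
    have hshift : ∀ y, y + x = (y - a • v) + x₂ := fun y => by
      obtain rfl : b = 1 - a := by linarith
      simp only [x, v]; module
    simp_rw [w, hshift]
    exact lintegral_sub_right_eq_self (fun z => φ z * h (z + x₂)) (a • v)
  calc gaussianConv μ c h x
      = ∫⁻ y, K * (u y ^ a * w y ^ b) ∂μ := lintegral_congr hpt
    _ = K * ∫⁻ y, u y ^ a * w y ^ b ∂μ := lintegral_const_mul' _ _ ENNReal.ofReal_ne_top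
    _ ≤ K * ((∫⁻ y, u y ∂μ) ^ a * (∫⁻ y, w y ∂μ) ^ b) :=
        mul_le_mul_right (ENNReal.lintegral_mul_norm_pow_le hu hw ha hb hab) K
    _ = K * gaussianConv μ c h x₁ ^ a * gaussianConv μ c h x₂ ^ b := by
        rw [hx₁, hx₂, mul_assoc]

end InnerProductSpace

theorem volume_absolutelyContinuous_stdGaussian (n : ℕ) :
    (volume : Measure (EuclideanSpace ℝ (Fin n))) ≪ stdGaussian n :=
  withDensity_absolutelyContinuous' (by fun_prop) (Filter.Eventually.of_forall fun _ =>
    (ENNReal.ofReal_pos.2 (mul_pos (rpow_pos_of_pos (by positivity) _) (exp_pos _))).ne')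

theorem ofReal_integral_stdGaussian_eq_gaussianConv {n : ℕ}
    {f : EuclideanSpace ℝ (Fin n) → ℝ} (hf : ∀ x, 0 ≤ f x) {ρ σ : ℝ} (hσ : σ ≠ 0)
    {x : EuclideanSpace ℝ (Fin n)} (hx : Integrable (fun y => f (ρ • x + σ • y)) (stdGaussian n)) :
    ENNReal.ofReal (∫ y, f (ρ • x + σ • y) ∂stdGaussian n) =
      gaussianConv volume ((2 * π) ^ (-(n : ℝ) / 2)) (fun z => ENNReal.ofReal (f (σ • z)))
        ((ρ / σ) • x) := by
  rw [ofReal_integral_eq_lintegral_ofReal hx (Filter.Eventually.of_forall fun y => hf _),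
    stdGaussian, lintegral_withDensity_eq_lintegral_mul_non_measurable _ (by fun_prop)
      (Filter.Eventually.of_forall fun _ => ENNReal.ofReal_lt_top)]
  refine lintegral_congr fun y => ?_
  dsimp only [Pi.mul_apply]
  rw [smul_add, smul_smul, mul_div_cancel₀ _ hσ, add_comm]

theorem strongConvexOn_log_integral_stdGaussian {n : ℕ} {f : EuclideanSpace ℝ (Fin n) → ℝ}
    (hf : ∀ x, 0 ≤ f x) {ρ σ : ℝ} (hσ : σ ≠ 0)
    (hpos : ∀ x, 0 < ∫ y, f (ρ • x + σ • y) ∂stdGaussian n) :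
    StrongConvexOn Set.univ (-(ρ / σ) ^ 2)
      (fun x => log (∫ y, f (ρ • x + σ • y) ∂stdGaussian n)) := by
  have hint : ∀ x, Integrable (fun y => f (ρ • x + σ • y)) (stdGaussian n) :=
    fun x => Integrable.of_integral_ne_zero (hpos x).ne'
  have hh : AEMeasurable (fun z => ENNReal.ofReal (f (σ • z))) volume := by
    simpa using ((hint 0).aemeasurable.mono_ac
      (volume_absolutelyContinuous_stdGaussian n)).ennreal_ofReal
  refine strongConvexOn_log_of_le_exp_mul_rpow convex_univ (fun x _ => hpos x) ?_
  intro x₁ _ x₂ _ a b ha hb hab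
  have hI₁ := rpow_nonneg (hpos x₁).le a
  have hI₂ := rpow_nonneg (hpos x₂).le b
  have key := gaussianConv_smul_add_smul_le volume
    (rpow_nonneg (by positivity) (-(n : ℝ) / 2) : (0 : ℝ) ≤ (2 * π) ^ (-(n : ℝ) / 2)) hh ha hb hab
    ((ρ / σ) • x₁) ((ρ / σ) • x₂)
  rw [smul_comm a, smul_comm b, ← smul_add, ← smul_sub, norm_smul, mul_pow, norm_eq_abs, sq_abs,
    ← ofReal_integral_stdGaussian_eq_gaussianConv hf hσ (hint _),
    ← ofReal_integral_stdGaussian_eq_gaussianConv hf hσ (hint _),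
    ← ofReal_integral_stdGaussian_eq_gaussianConv hf hσ (hint _),
    ENNReal.ofReal_rpow_of_nonneg (hpos _).le ha, ENNReal.ofReal_rpow_of_nonneg (hpos _).le hb,
    ← ENNReal.ofReal_mul (by positivity), ← ENNReal.ofReal_mul (by positivity),
    ENNReal.ofReal_le_ofReal_iff (by positivity)] at key
  convert key using 3
  congr 1
  ring

theorem strongConvexOn_log_OU {n : ℕ} {f : EuclideanSpace ℝ (Fin n) → ℝ} (hf : ∀ x, 0 ≤ f x)
    {t : ℝ} (ht : 0 < t) (hpos : ∀ x, 0 < OU n t f x) :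
    StrongConvexOn Set.univ (-(exp (2 * t) - 1)⁻¹) (fun x => log (OU n t f x)) := by
  have hσsq : 0 < 1 - exp (-2 * t) := by
    linarith [exp_lt_one_iff.2 (by linarith : -2 * t < 0)]
  have hρσ : (exp (-t) / sqrt (1 - exp (-2 * t))) ^ 2 = (exp (2 * t) - 1)⁻¹ := by
    have hsq : exp (-t) ^ 2 = exp (-2 * t) := by rw [← exp_nat_mul]; ring_nf
    have hinv : exp (-2 * t) = (exp (2 * t))⁻¹ := by rw [← exp_neg]; ring_nf
    rw [div_pow, sq_sqrt hσsq.le, hsq, hinv]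
    field_simp
  have h := strongConvexOn_log_integral_stdGaussian hf (sqrt_pos.2 hσsq).ne' hpos
  rwa [hρσ] at h

end

/-- Hessian bound `∇² log (Q_t f) ≥ -(1/(2t)) id`, encoded as convexity of
`x ↦ log (Q_t f x) + (1/(4t)) ‖x‖²` (wherever `Q_t f > 0`, here assumed everywhere). -/
theorem stmt_1 {n : ℕ} (f : EuclideanSpace ℝ (Fin n) → ℝ) (hf : ∀ x, 0 ≤ f x)
    (t : ℝ) (ht : 0 < t) (hpos : ∀ x, 0 < OU n t f x) :
    ConvexOn ℝ Set.univ (fun x => Real.log (OU n t f x) + (1 / (4 * t)) * ‖x‖ ^ 2) := by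
  have h := (strongConvexOn_log_OU hf ht hpos).mono
    (neg_le_neg (inv_exp_sub_one_le_inv (by positivity : 0 < 2 * t)))
  rw [strongConvexOn_iff_convex] at h
  refine h.congr fun x _ => ?_
  ring
end

section
/- There is a universal constant c' > 0 such that for every r ≥ e, setting α = √(2 log r), the function f_α(x) = exp(αx - α²/2) satisfies γ_1({f_α ≥ r}) ≥ c'/(r √(log r)). -/
open MeasureTheory ProbabilityTheory

/-!
Since `α² = 2 log r`, the level set `{f_α ≥ r}` is the half-line `[α, ∞)`. It contains
`[α, α + 1/α]`, an interval of length `1/α = 1/√(2 log r)` on which the Gaussian density is at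
least its value at `α + 1/α`; as `(α + 1/α)² ≤ α² + 5/2` once `α² ≥ 2`, that value is at least
`e^{-5/4} / (√(2π) r)`.
-/

open Real Set
open scoped NNReal

lemma gaussianPDFReal_antitoneOn (μ : ℝ) (v : ℝ≥0) : AntitoneOn (gaussianPDFReal μ v) (Ici μ) := by
  intro x hx y _ hxy
  simp only [gaussianPDFReal]
  have : 0 ≤ x - μ := sub_nonneg.2 hx
  gcongr

lemma ofReal_mul_gaussianPDFReal_le_gaussianReal_Icc {μ : ℝ} {v : ℝ≥0} (hv : v ≠ 0) {a b : ℝ}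
    (ha : μ ≤ a) :
    ENNReal.ofReal ((b - a) * gaussianPDFReal μ v b) ≤ gaussianReal μ v (Icc a b) := by
  rw [gaussianReal_apply μ hv, mul_comm, ENNReal.ofReal_mul (gaussianPDFReal_nonneg _ _ _),
    ← Real.volume_Icc, ← setLIntegral_const]
  refine setLIntegral_mono (measurable_gaussianPDF μ v) fun x hx ↦ ENNReal.ofReal_le_ofReal ?_
  exact gaussianPDFReal_antitoneOn μ v (ha.trans hx.1) (ha.trans (hx.1.trans hx.2)) hx.2

lemma ofReal_le_gaussianReal_Ici {a : ℝ} (ha : 2 ≤ a ^ 2) (ha₀ : 0 < a) :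
    ENNReal.ofReal (exp (-a ^ 2 / 2 - 5 / 4) / (a * √(2 * π))) ≤ gaussianReal 0 1 (Ici a) := by
  refine le_trans ?_ ((measure_mono Icc_subset_Ici_self).trans'
    (ofReal_mul_gaussianPDFReal_le_gaussianReal_Icc one_ne_zero ha₀.le (b := a + a⁻¹)))
  gcongr
  have hsq : (a + a⁻¹) ^ 2 ≤ a ^ 2 + 5 / 2 := by
    have : a⁻¹ ^ 2 ≤ 1 / 2 := by
      rw [inv_pow]; exact inv_le_of_inv_le₀ (by norm_num) (by linarith)
    nlinarith [mul_inv_cancel₀ ha₀.ne']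
  calc exp (-a ^ 2 / 2 - 5 / 4) / (a * √(2 * π))
      = a⁻¹ * ((√(2 * π))⁻¹ * exp (-(a ^ 2 + 5 / 2) / 2)) := by
        field_simp; ring_nf
    _ ≤ (a + a⁻¹ - a) * gaussianPDFReal 0 1 (a + a⁻¹) := by
        simp only [gaussianPDFReal, add_sub_cancel_left, sub_zero, NNReal.coe_one, mul_one]
        gcongr

lemma setOf_le_exp_mul_sub_eq_Ici {r α : ℝ} (hr : 0 < r) (hα : 0 < α) (c : ℝ) :
    {x | r ≤ exp (α * x - c)} = Ici ((log r + c) / α) := by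
  ext x
  rw [mem_ofPred_eq, mem_Ici, ← log_le_iff_le_exp hr, div_le_iff₀' hα]
  constructor <;> intro <;> linarith

theorem stmt_5 :
    ∃ c' : ℝ, 0 < c' ∧ ∀ r : ℝ, Real.exp 1 ≤ r →
      ENNReal.ofReal (c' / (r * Real.sqrt (Real.log r))) ≤
        gaussianReal 0 1
          {x | r ≤ Real.exp (Real.sqrt (2 * Real.log r) * x - (Real.sqrt (2 * Real.log r)) ^ 2 / 2)} := by
  refine ⟨exp (-(5 / 4)) / (2 * √π), by positivity, fun r hr ↦ ?_⟩
  have hr₀ : 0 < r := (exp_pos 1).trans_le hr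
  have hL : 1 ≤ log r := (le_log_iff_exp_le hr₀).2 hr
  set α := √(2 * log r)
  have hα₀ : 0 < α := sqrt_pos.2 (by linarith)
  have hα2 : α ^ 2 = 2 * log r := sq_sqrt (by linarith)
  have hthreshold : (log r + α ^ 2 / 2) / α = α := by
    field_simp; linarith
  rw [setOf_le_exp_mul_sub_eq_Ici hr₀ hα₀, hthreshold]
  refine le_trans (le_of_eq ?_) (ofReal_le_gaussianReal_Ici (by linarith) hα₀)
  have hexp : exp (-α ^ 2 / 2 - 5 / 4) = exp (-(5 / 4)) / r := by
    rw [hα2, sub_eq_neg_add, exp_add, neg_div, mul_div_cancel_left₀ _ two_ne_zero, exp_neg (log r),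
      exp_log hr₀, ← div_eq_mul_inv]
  have hsqrt : α * √(2 * π) = 2 * √π * √(log r) := by
    rw [show α = √2 * √(log r) from sqrt_mul zero_le_two _, sqrt_mul zero_le_two]
    linear_combination √π * √(log r) * Real.mul_self_sqrt zero_le_two
  rw [hexp, hsqrt]
  field_simp
end

section
/- Let f ≥ 0 with ∫ f dγ_n = 1, let G be a standard Gaussian vector and X a random vector with density f with respect to γ_n. Suppose there exist constants A, r₀ > 1 such that P(f(X) ∈ (s, e·s]) ≤ A/√(log s) for all s > r₀. Then for all r > r₀, P(f(G) > r) ≤ (e/(e-1))·A/(r·√(log r)). -/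
open MeasureTheory

/-- `G` has law `γ_n`, `X` has law `μ = f · γ_n`; tail bound for shells transfers to the
Markov-type tail bound for `G`. -/
theorem stmt_6 {n : ℕ} (f : EuclideanSpace ℝ (Fin n) → ℝ) (hmeas : Measurable f)
    (hnn : ∀ x, 0 ≤ f x) (hint : ∫ x, f x ∂(stdGaussian n) = 1)
    (μ : Measure (EuclideanSpace ℝ (Fin n)))
    (hμ : μ = (stdGaussian n).withDensity (fun x => ENNReal.ofReal (f x)))
    (A r₀ : ℝ) (hA : 1 < A) (hr₀ : 1 < r₀)
    (hshell : ∀ s : ℝ, r₀ < s →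
      (μ {x | f x ∈ Set.Ioc s (Real.exp 1 * s)}).toReal ≤ A / Real.sqrt (Real.log s)) :
    ∀ r : ℝ, r₀ < r →
      (stdGaussian n {x | r < f x}).toReal ≤
        (Real.exp 1 / (Real.exp 1 - 1)) * A / (r * Real.sqrt (Real.log r)) := by
  intro r hr
  set γ := stdGaussian n with hγ
  have hr1 : (1:ℝ) < r := lt_trans hr₀ hr
  have hr0 : (0:ℝ) < r := lt_trans one_pos hr1
  have hlogr : 0 < Real.log r := Real.log_pos hr1
  have hsq : 0 < Real.sqrt (Real.log r) := Real.sqrt_pos.mpr hlogr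
  have hA0 : (0:ℝ) < A := lt_trans one_pos hA
  set c : ℝ := A / Real.sqrt (Real.log r) with hc
  have hc0 : 0 < c := div_pos hA0 hsq
  -- integrability of f
  have hInt : Integrable f γ := by
    by_contra h
    rw [integral_undef h] at hint
    norm_num at hint
  -- μ is a probability measure
  have hμuniv : μ Set.univ = 1 := by
    rw [hμ, withDensity_apply _ MeasurableSet.univ, Measure.restrict_univ,
      ← ofReal_integral_eq_lintegral_ofReal hInt (Filter.Eventually.of_forall hnn), hint]
    simp
  have hμfin : ∀ s : Set (EuclideanSpace ℝ (Fin n)), μ s ≠ ⊤ := fun s =>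
    ne_top_of_le_ne_top (by simp [hμuniv]) (measure_mono (Set.subset_univ s))
  -- shells
  set S : ℕ → Set (EuclideanSpace ℝ (Fin n)) := fun k =>
    {x | f x ∈ Set.Ioc (Real.exp k * r) (Real.exp 1 * (Real.exp k * r))} with hS
  have hSmeas : ∀ k, MeasurableSet (S k) := fun k => hmeas measurableSet_Ioc
  -- covering
  have hcover : {x | r < f x} ⊆ ⋃ k : ℕ, S k := by
    intro x hx
    simp only [Set.mem_setOf_eq] at hx
    have hfx : 0 < f x := lt_trans hr0 hx
    set t : ℝ := Real.log (f x / r) with ht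
    have ht0 : 0 < t := Real.log_pos ((one_lt_div hr0).mpr hx)
    have hceil : 1 ≤ ⌈t⌉₊ := Nat.one_le_ceil_iff.mpr ht0
    refine Set.mem_iUnion.mpr ⟨⌈t⌉₊ - 1, ?_, ?_⟩
    · -- exp (⌈t⌉₊ - 1) * r < f x
      have h1 : ((⌈t⌉₊ - 1 : ℕ) : ℝ) < t := by
        have := Nat.ceil_lt_add_one (le_of_lt ht0)
        push_cast [Nat.cast_sub hceil]
        linarith
      have := Real.exp_lt_exp.mpr h1
      rw [ht, Real.exp_log (div_pos hfx hr0)] at this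
      calc Real.exp ((⌈t⌉₊ - 1 : ℕ) : ℝ) * r < (f x / r) * r := by
            exact mul_lt_mul_of_pos_right this hr0
        _ = f x := div_mul_cancel₀ _ (ne_of_gt hr0)
    · -- f x ≤ exp 1 * (exp (⌈t⌉₊ - 1) * r)
      have h2 : t ≤ ((⌈t⌉₊ - 1 : ℕ) : ℝ) + 1 := by
        have := Nat.le_ceil t
        push_cast [Nat.cast_sub hceil]
        linarith
      have := Real.exp_le_exp.mpr h2
      rw [ht, Real.exp_log (div_pos hfx hr0), Real.exp_add] at this
      have : f x / r * r ≤ Real.exp ((⌈t⌉₊ - 1 : ℕ) : ℝ) * Real.exp 1 * r :=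
        mul_le_mul_of_nonneg_right this (le_of_lt hr0)
      rw [div_mul_cancel₀ _ (ne_of_gt hr0)] at this
      calc f x ≤ Real.exp ((⌈t⌉₊ - 1 : ℕ) : ℝ) * Real.exp 1 * r := this
        _ = Real.exp 1 * (Real.exp ((⌈t⌉₊ - 1 : ℕ) : ℝ) * r) := by ring
  -- per-shell bound
  have hshellγ : ∀ k : ℕ, γ (S k) ≤ ENNReal.ofReal c / ENNReal.ofReal (Real.exp k * r) := by
    intro k
    have hek : (0:ℝ) < Real.exp k * r := mul_pos (Real.exp_pos _) hr0
    have hmul : ENNReal.ofReal (Real.exp k * r) * γ (S k) ≤ μ (S k) := by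
      rw [hμ, withDensity_apply _ (hSmeas k)]
      calc ENNReal.ofReal (Real.exp k * r) * γ (S k)
          = ∫⁻ _ in S k, ENNReal.ofReal (Real.exp k * r) ∂γ := by
            rw [setLIntegral_const]
        _ ≤ ∫⁻ x in S k, ENNReal.ofReal (f x) ∂γ := by
            refine setLIntegral_mono (hmeas.ennreal_ofReal) (fun x hx => ?_)
            exact ENNReal.ofReal_le_ofReal (le_of_lt hx.1)
    have hμS : μ (S k) ≤ ENNReal.ofReal c := by
      rw [← ENNReal.ofReal_toReal (hμfin (S k))]
      apply ENNReal.ofReal_le_ofReal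
      have hsk : r₀ < Real.exp k * r := by
        nlinarith [Real.one_le_exp (Nat.cast_nonneg k : (0:ℝ) ≤ k), hr0]
      refine le_trans (hshell _ hsk) ?_
      rw [hc]
      refine div_le_div_of_nonneg_left hA0.le hsq ?_
      apply Real.sqrt_le_sqrt
      rw [Real.log_mul (Real.exp_ne_zero _) (ne_of_gt hr0), Real.log_exp]
      have : (0:ℝ) ≤ (k:ℝ) := Nat.cast_nonneg k
      linarith
    rw [ENNReal.le_div_iff_mul_le (Or.inl (by simp [hek])) (Or.inl ENNReal.ofReal_ne_top)]
    calc γ (S k) * ENNReal.ofReal (Real.exp k * r)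
        = ENNReal.ofReal (Real.exp k * r) * γ (S k) := mul_comm _ _
      _ ≤ μ (S k) := hmul
      _ ≤ ENNReal.ofReal c := hμS
  -- sum the geometric series
  have hsum : ∑' k : ℕ, ENNReal.ofReal (c / (Real.exp k * r))
      = ENNReal.ofReal ((Real.exp 1 / (Real.exp 1 - 1)) * A / (r * Real.sqrt (Real.log r))) := by
    have he1 : (0:ℝ) < Real.exp 1 := Real.exp_pos 1
    have he1' : (1:ℝ) < Real.exp 1 := by
      have := Real.add_one_lt_exp (x := 1) one_ne_zero
      linarith
    have hx0 : (0:ℝ) ≤ Real.exp (-1) := le_of_lt (Real.exp_pos _)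
    have hx1 : Real.exp (-1) < 1 := Real.exp_lt_one_iff.mpr (by norm_num)
    have heq : ∀ k : ℕ, c / (Real.exp k * r) = (c / r) * Real.exp (-1) ^ k := by
      intro k
      rw [← Real.exp_nat_mul]
      rw [show ((k:ℝ) * (-1)) = -(k:ℝ) by ring, Real.exp_neg,
        mul_comm (Real.exp (k:ℝ)) r, div_mul_eq_div_div, div_eq_mul_inv (c/r)]
    have hsummable : Summable (fun k : ℕ => (c / r) * Real.exp (-1) ^ k) :=
      (summable_geometric_of_lt_one hx0 hx1).mul_left _
    calc ∑' k : ℕ, ENNReal.ofReal (c / (Real.exp k * r))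
        = ∑' k : ℕ, ENNReal.ofReal ((c / r) * Real.exp (-1) ^ k) := by
          congr 1; ext k; rw [heq k]
      _ = ENNReal.ofReal (∑' k : ℕ, (c / r) * Real.exp (-1) ^ k) := by
          rw [ENNReal.ofReal_tsum_of_nonneg (fun k => by positivity) hsummable]
      _ = ENNReal.ofReal ((c / r) * (1 - Real.exp (-1))⁻¹) := by
          rw [tsum_mul_left, tsum_geometric_of_lt_one hx0 hx1]
      _ = ENNReal.ofReal ((Real.exp 1 / (Real.exp 1 - 1)) * A / (r * Real.sqrt (Real.log r))) := by
          congr 1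
          rw [hc, Real.exp_neg]
          have h1 : Real.exp 1 - 1 > 0 := by linarith
          field_simp
  -- final assembly
  have hmain : γ {x | r < f x} ≤
      ENNReal.ofReal ((Real.exp 1 / (Real.exp 1 - 1)) * A / (r * Real.sqrt (Real.log r))) := by
    calc γ {x | r < f x} ≤ γ (⋃ k : ℕ, S k) := measure_mono hcover
      _ ≤ ∑' k : ℕ, γ (S k) := measure_iUnion_le _
      _ ≤ ∑' k : ℕ, ENNReal.ofReal c / ENNReal.ofReal (Real.exp k * r) :=
          ENNReal.tsum_le_tsum hshellγ
      _ = ∑' k : ℕ, ENNReal.ofReal (c / (Real.exp k * r)) := by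
          congr 1; ext k
          rw [ENNReal.ofReal_div_of_pos (mul_pos (Real.exp_pos _) hr0)]
      _ = _ := hsum
  have he1'' : (1:ℝ) < Real.exp 1 := by
    have := Real.add_one_lt_exp (x := 1) one_ne_zero
    linarith
  refine ENNReal.toReal_le_of_le_ofReal ?_ hmain
  apply div_nonneg _ (by positivity)
  apply mul_nonneg _ hA0.le
  exact div_nonneg (Real.exp_pos 1).le (by linarith)
end
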